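/- arXiv:1709.09628 — 7 statements merged into one kernel-verified Lean document; each statement's English description precedes it below -/
import Mathlib

section
/- Smoothing property: if S is a symmetric positive semidefinite operator on (V, a(·,·)) with a(Sv,v) ≤ a(v,v) for all v, then for every positive integer m and every v ∈ V, a((I−S)S^{2m} v, v) ≤ (1/(2m)) · a((I−S^{2m}) v, v). -/
open RealInnerProductSpace

theorem stmt_2 {V : Type*} [NormedAddCommGroup V] [InnerProductSpace ℝ V]
    [FiniteDimensional ℝ V] (S : V →ₗ[ℝ] V)
    (hsym : ∀ v w : V, ⟪S v, w⟫ = ⟪v, S w⟫)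
    (hpsd : ∀ v : V, 0 ≤ ⟪S v, v⟫)
    (hcon : ∀ v : V, ⟪S v, v⟫ ≤ ⟪v, v⟫)
    (m : ℕ) (hm : 0 < m) (v : V) :
    ⟪((1 - S) * S ^ (2 * m)) v, v⟫ ≤
      (1 / (2 * (m : ℝ))) * ⟪(1 - S ^ (2 * m)) v, v⟫ := by
  set n := 2 * m with hn
  have hc1 : Commute S (1 - S) := (Commute.one_right S).sub_right (Commute.refl S)
  -- S commutes with its powers, pointwise
  have hcomm : ∀ (j : ℕ) (y : V), S ((S ^ j) y) = (S ^ j) (S y) := by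
    intro j y
    rw [← Module.End.mul_apply, ← pow_succ', pow_succ, Module.End.mul_apply]
  -- symmetry of powers
  have hsym_pow : ∀ (k : ℕ) (x y : V), ⟪(S ^ k) x, y⟫ = ⟪x, (S ^ k) y⟫ := by
    intro k
    induction k with
    | zero => intro x y; simp
    | succ j ih =>
      intro x y
      rw [pow_succ]
      simp only [Module.End.mul_apply]
      rw [ih, hsym, hcomm]
  -- powers are PSD
  have hpsd_pow : ∀ (k : ℕ) (x : V), 0 ≤ ⟪(S ^ k) x, x⟫ := by
    intro k x
    rcases Nat.even_or_odd k with ⟨j, hj⟩ | ⟨j, hj⟩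
    · have : (S ^ k) x = (S ^ j) ((S ^ j) x) := by
        rw [hj, ← Module.End.mul_apply, ← pow_add]
      rw [this, hsym_pow]
      exact real_inner_self_nonneg
    · have : (S ^ k) x = (S ^ j) (S ((S ^ j) x)) := by
        rw [hj, show 2 * j + 1 = j + 1 + j by omega, pow_add, pow_succ]
        simp only [Module.End.mul_apply]
      rw [this, hsym_pow]
      exact hpsd _
  -- symmetry of 1 - S
  have hsymT : ∀ x y : V, ⟪(1 - S) x, y⟫ = ⟪x, (1 - S) y⟫ := by
    intro x y
    simp only [LinearMap.sub_apply, Module.End.one_apply, inner_sub_left, inner_sub_right, hsym]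
  set a : ℕ → ℝ := fun k => ⟪(S ^ k * (1 - S)) v, v⟫ with ha
  have ha_step : ∀ k, a (k + 1) ≤ a k := by
    intro k
    have key : a k - a (k + 1) = ⟪(S ^ k) ((1 - S) v), (1 - S) v⟫ := by
      have hop : S ^ k * (1 - S) - S ^ (k + 1) * (1 - S)
          = (1 - S) * (S ^ k * (1 - S)) := by
        rw [sub_mul 1 S, one_mul, pow_succ', mul_assoc]
      have h2 := congrArg (fun (f : V →ₗ[ℝ] V) => ⟪f v, v⟫) hop
      simp only [LinearMap.sub_apply, inner_sub_left] at h2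
      rw [ha]
      simp only
      rw [h2]
      simp only [Module.End.mul_apply]
      rw [hsymT, hsym_pow]
    nlinarith [hpsd_pow k ((1 - S) v), key]
  have ha_anti : Antitone a := antitone_nat_of_succ_le ha_step
  have hsum : ∑ k ∈ Finset.range n, a k = ⟪(1 - S ^ n) v, v⟫ := by
    have hop : ∑ k ∈ Finset.range n, (S ^ k * (1 - S)) = 1 - S ^ n := by
      rw [← Finset.sum_mul]
      have h := geom_sum_mul S n
      calc (∑ i ∈ Finset.range n, S ^ i) * (1 - S)
          = -((∑ i ∈ Finset.range n, S ^ i) * (S - 1)) := by rw [← mul_neg, neg_sub]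
        _ = 1 - S ^ n := by rw [h, neg_sub]
    calc ∑ k ∈ Finset.range n, a k
        = ⟪(∑ k ∈ Finset.range n, (S ^ k * (1 - S))) v, v⟫ := by
          rw [LinearMap.sum_apply, sum_inner]
      _ = ⟪(1 - S ^ n) v, v⟫ := by rw [hop]
  have hcard : (n : ℝ) * a n ≤ ∑ k ∈ Finset.range n, a k := by
    have h := Finset.card_nsmul_le_sum (Finset.range n) a (a n)
      (fun i hi => ha_anti (le_of_lt (Finset.mem_range.mp hi)))
    simpa [nsmul_eq_mul] using h
  have hlhs : ⟪((1 - S) * S ^ n) v, v⟫ = a n := by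
    rw [ha]
    simp only
    rw [(hc1.symm.pow_right n).eq]
  rw [hsum] at hcard
  have hncast : ((n : ℝ)) = 2 * (m : ℝ) := by rw [hn]; push_cast; ring
  have h2m : (0 : ℝ) < 2 * (m : ℝ) := by positivity
  have hfin : (2 * (m : ℝ)) * a n ≤ ⟪(1 - S ^ n) v, v⟫ := by
    rw [← hncast]; exact hcard
  rw [hlhs, div_mul_eq_mul_div, le_div_iff₀ h2m]
  linarith [hfin]
end

section
/- Approximation property: let W ⊂ V with a-orthogonal projection P : V → W, and let S be a linear operator on V such that a(Sv,v) ≤ δ·a(v,v) for all v ∈ V for some 0 < δ < 1. Then for all w ∈ V, a((I−P)w, w) ≤ (1/(1−δ)) · a((I−S)w, w). -/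
open RealInnerProductSpace

theorem stmt_3 {V : Type*} [NormedAddCommGroup V] [InnerProductSpace ℝ V]
    [FiniteDimensional ℝ V] (W : Submodule ℝ V)
    (P : V →ₗ[ℝ] V)
    (hPmem : ∀ v : V, P v ∈ W)
    (hPorth : ∀ v : V, ∀ u ∈ W, ⟪v - P v, u⟫ = 0)
    (S : V →ₗ[ℝ] V) (δ : ℝ) (hδ0 : 0 < δ) (hδ1 : δ < 1)
    (hS : ∀ v : V, ⟪S v, v⟫ ≤ δ * ⟪v, v⟫)
    (w : V) :
    ⟪w - P w, w⟫ ≤ (1 / (1 - δ)) * ⟪w - S w, w⟫ := by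
  have h1 : ⟪w - P w, P w⟫ = 0 := hPorth w _ (hPmem w)
  have h2 : ⟪w - S w, w⟫ = ⟪w, w⟫ - ⟪S w, w⟫ := by rw [inner_sub_left]
  have h3 := hS w
  have h4 : (0:ℝ) ≤ ⟪P w, P w⟫ := real_inner_self_nonneg
  have h5 : (0:ℝ) ≤ ⟪w - P w, w - P w⟫ := real_inner_self_nonneg
  have h6 : ⟪w - P w, w - P w⟫ = ⟪w - P w, w⟫ - ⟪w - P w, P w⟫ := by
    rw [inner_sub_right]
  have h7 : ⟪w, w⟫ = ⟪w - P w, w⟫ + ⟪P w, w⟫ := by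
    rw [← inner_add_left]; simp
  have h8 : ⟪P w, w⟫ = ⟪P w, w - P w⟫ + ⟪P w, P w⟫ := by
    rw [← inner_add_right]; simp
  have h9 : ⟪P w, w - P w⟫ = 0 := by rw [real_inner_comm]; exact h1
  rw [one_div, inv_mul_eq_div, le_div_iff₀ (by linarith)]
  nlinarith [@real_inner_self_nonneg V _ _ w]
end

section
/- Let W ⊂ V with a-orthogonal projection P, and let S be a symmetric positive semidefinite operator on V with a(Sv,v) ≤ δ·a(v,v) for all v, where 0 < δ < 1. Then for every positive integer m and every v ∈ V, a((I−P)S^m v, (I−P)S^m v) ≤ (1/(1−δ)) · (1/(2m)) · a((I−S^{2m})v, v). -/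
open RealInnerProductSpace

theorem stmt_4 {V : Type*} [NormedAddCommGroup V] [InnerProductSpace ℝ V]
    [FiniteDimensional ℝ V] (W : Submodule ℝ V)
    (P : V →ₗ[ℝ] V)
    (hPmem : ∀ v : V, P v ∈ W)
    (hPorth : ∀ v : V, ∀ u ∈ W, ⟪v - P v, u⟫ = 0)
    (S : V →ₗ[ℝ] V)
    (hsym : ∀ v w : V, ⟪S v, w⟫ = ⟪v, S w⟫)
    (hpsd : ∀ v : V, 0 ≤ ⟪S v, v⟫)
    (δ : ℝ) (hδ0 : 0 < δ) (hδ1 : δ < 1)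
    (hS : ∀ v : V, ⟪S v, v⟫ ≤ δ * ⟪v, v⟫)
    (m : ℕ) (hm : 0 < m) (v : V) :
    ⟪(S ^ m) v - P ((S ^ m) v), (S ^ m) v - P ((S ^ m) v)⟫ ≤
      (1 / (1 - δ)) * (1 / (2 * (m : ℝ))) * ⟪(1 - S ^ (2 * m)) v, v⟫ := by
  have h1δ : (0 : ℝ) < 1 - δ := by linarith
  -- commutation of S with its powers
  have hcomm : ∀ (n : ℕ) (z : V), S ((S ^ n) z) = (S ^ n) (S z) := by
    intro n z
    rw [← Module.End.mul_apply, ← Module.End.mul_apply, ← pow_succ', pow_succ,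
      Module.End.mul_apply]
  -- symmetry of powers of S
  have hsymp : ∀ (k : ℕ) (x y : V), ⟪(S ^ k) x, y⟫ = ⟪x, (S ^ k) y⟫ := by
    intro k
    induction k with
    | zero => intro x y; simp
    | succ n ih =>
      intro x y
      have hc : ∀ z : V, (S ^ (n + 1)) z = (S ^ n) (S z) := by
        intro z
        rw [pow_succ, Module.End.mul_apply]
      rw [hc x, hc y, ih (S x) y, hsym, hcomm]
  -- shift lemma
  have hshift : ∀ p q : ℕ, ⟪(S ^ (p + q)) v, v⟫ = ⟪(S ^ p) v, (S ^ q) v⟫ := by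
    intro p q
    rw [pow_add, Module.End.mul_apply, hsymp p, real_inner_comm]
  -- key Cauchy-Schwarz-type fact: ‖Sw‖² ≤ δ⟪Sw,w⟫
  have key : ∀ w : V, ⟪S w, S w⟫ ≤ δ * ⟪S w, w⟫ := by
    intro w
    have h1 : ⟪S (S w), w⟫ = ⟪S w, S w⟫ := by rw [hsym]
    have hquad : ∀ r : ℝ, 0 ≤ ⟪S (S w), S w⟫ * (r * r) + (2 * ⟪S w, S w⟫) * r
        + ⟪S w, w⟫ := by
      intro r
      have h0 := hpsd (w + r • S w)
      have e1 : S (w + r • S w) = S w + r • S (S w) := by simp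
      rw [e1, inner_add_left, inner_add_right, inner_add_right, real_inner_smul_left,
        real_inner_smul_right, real_inner_smul_left, real_inner_smul_right, h1] at h0
      nlinarith [h0]
    have hdisc := discrim_le_zero hquad
    rw [discrim] at hdisc
    have hpnn : 0 ≤ ⟪S w, w⟫ := hpsd w
    have htnn : (0 : ℝ) ≤ ⟪S w, S w⟫ := real_inner_self_nonneg
    have hcle : ⟪S (S w), S w⟫ ≤ δ * ⟪S w, S w⟫ := hS (S w)
    rcases eq_or_lt_of_le htnn with h | h
    · nlinarith
    · nlinarith
  -- the sequence a k := ⟪S^k v, v⟫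
  set a : ℕ → ℝ := fun k => ⟪(S ^ k) v, v⟫ with ha
  have hnn : ∀ k, 0 ≤ a k := by
    intro k
    rcases Nat.even_or_odd k with ⟨j, hj⟩ | ⟨j, hj⟩
    · have he : a k = ⟪(S ^ j) v, (S ^ j) v⟫ := by
        simp only [ha]; rw [hj, hshift]
      rw [he]; exact real_inner_self_nonneg
    · have he : a k = ⟪S ((S ^ j) v), (S ^ j) v⟫ := by
        simp only [ha]
        rw [hj, show 2 * j + 1 = (j + 1) + j from by ring, hshift, pow_succ',
          Module.End.mul_apply]
      rw [he]; exact hpsd _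
  -- step: a (k+1) ≤ δ * a k
  have hstep : ∀ k, a (k + 1) ≤ δ * a k := by
    intro k
    rcases Nat.even_or_odd k with ⟨j, hj⟩ | ⟨j, hj⟩
    · have h1 : a (k + 1) = ⟪S ((S ^ j) v), (S ^ j) v⟫ := by
        simp only [ha]
        rw [hj, show j + j + 1 = (j + 1) + j from by ring, hshift, pow_succ',
          Module.End.mul_apply]
      have h2 : a k = ⟪(S ^ j) v, (S ^ j) v⟫ := by
        simp only [ha]; rw [hj, hshift]
      rw [h1, h2]; exact hS _
    · have h1 : a (k + 1) = ⟪S ((S ^ j) v), S ((S ^ j) v)⟫ := by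
        simp only [ha]
        rw [hj, show 2 * j + 1 + 1 = (j + 1) + (j + 1) from by ring, hshift,
          pow_succ', Module.End.mul_apply]
      have h2 : a k = ⟪S ((S ^ j) v), (S ^ j) v⟫ := by
        simp only [ha]
        rw [hj, show 2 * j + 1 = (j + 1) + j from by ring, hshift, pow_succ',
          Module.End.mul_apply]
      rw [h1, h2]; exact key _
  have hdec : ∀ k, a (k + 1) ≤ a k := by
    intro k
    have := hstep k
    nlinarith [hnn k]
  have hmono : ∀ j k : ℕ, j ≤ k → a k ≤ a j := by
    intro j k hjk
    induction k with
    | zero => simp_all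
    | succ n ih =>
      rcases Nat.lt_or_ge j (n + 1) with h | h
      · exact le_trans (hdec n) (ih (Nat.lt_succ_iff.mp h))
      · have : j = n + 1 := le_antisymm hjk h
        rw [this]
  -- telescoping lower bound
  have hsum : ∀ n, n ≤ 2 * m → (n : ℝ) * (1 - δ) * a (2 * m) ≤ a 0 - a n := by
    intro n hn
    induction n with
    | zero => simp
    | succ n ih =>
      have hn' : n ≤ 2 * m := Nat.le_of_succ_le hn
      have hih := ih hn'
      have h2 : (1 - δ) * a (2 * m) ≤ a n - a (n + 1) := by
        have h3 : a (n + 1) ≤ δ * a n := hstep n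
        have h4 : a (2 * m) ≤ a n := hmono n (2 * m) hn'
        nlinarith
      push_cast
      nlinarith
  have htel := hsum (2 * m) le_rfl
  -- rewrite the RHS inner product
  have hRHS : ⟪(1 - S ^ (2 * m)) v, v⟫ = a 0 - a (2 * m) := by
    simp only [ha, LinearMap.sub_apply, Module.End.one_apply, inner_sub_left, pow_zero]
  -- projection bound
  set w : V := (S ^ m) v with hw
  have horth : ⟪w - P w, P w⟫ = 0 := hPorth w (P w) (hPmem w)
  have hproj : ⟪w - P w, w - P w⟫ ≤ ⟪w, w⟫ := by
    have hdecomp : w = (w - P w) + P w := by abel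
    have hid : ⟪w, w⟫ = ⟪w - P w, w - P w⟫ + 2 * ⟪w - P w, P w⟫ + ⟪P w, P w⟫ := by
      calc ⟪w, w⟫ = ⟪(w - P w) + P w, (w - P w) + P w⟫ := by rw [← hdecomp]
        _ = ⟪w - P w, w - P w⟫ + 2 * ⟪w - P w, P w⟫ + ⟪P w, P w⟫ :=
          real_inner_add_add_self _ _
    nlinarith [real_inner_self_nonneg (x := P w), horth]
  have hww : ⟪w, w⟫ = a (2 * m) := by
    simp only [ha, hw]
    rw [two_mul, hshift]
  -- final arithmetic
  rw [hRHS]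
  have hLHS : ⟪(S ^ m) v - P ((S ^ m) v), (S ^ m) v - P ((S ^ m) v)⟫ ≤ a (2 * m) := by
    rw [← hww]; exact hproj
  have hmR : (0 : ℝ) < (m : ℝ) := by exact_mod_cast hm
  have htel' : ((2 * m : ℕ) : ℝ) * (1 - δ) * a (2 * m) ≤ a 0 - a (2 * m) := htel
  push_cast at htel'
  have hpos : (0 : ℝ) < (1 - δ) * (2 * (m : ℝ)) := mul_pos h1δ (by positivity)
  rw [div_mul_div_comm, one_mul, div_mul_eq_mul_div, one_mul,
    le_div_iff₀ hpos]
  calc ⟪(S ^ m) v - P ((S ^ m) v), (S ^ m) v - P ((S ^ m) v)⟫ * ((1 - δ) * (2 * (m : ℝ)))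
      ≤ a (2 * m) * ((1 - δ) * (2 * (m : ℝ))) :=
        mul_le_mul_of_nonneg_right hLHS hpos.le
    _ ≤ a 0 - a (2 * m) := by nlinarith
end

section
/- One-step multigrid recursion bound: let V be a finite-dimensional real inner product space with inner product a(·,·), W a subspace with a-orthogonal projection P, S a symmetric positive semidefinite operator on V with a(Sv,v) ≤ δ·a(v,v) for 0 < δ < 1, m a positive integer, and E' a symmetric positive semidefinite operator on W with a(E'w,w) ≤ γ'·a(w,w) for all w ∈ W, where γ' ≤ γ := 1/(1 + 2m(1−δ)). Define E = S^m(I − (I − E')P)S^m on V. Then a(Ev,v) ≤ γ·a(v,v) for all v ∈ V. -/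
/-!
Write `u = S^m v`. Since `S^m` is symmetric, `a(Ev, v) = a((I - (I - E')P)u, u)`, and because `P`
is the `a`-orthogonal projection onto `W`, which `E'` preserves, this equals
`a(u,u) - a(Pu,Pu) + a(E'Pu, Pu) ≤ a(u,u)` as soon as `γ' ≤ 1`. The bounds `0 ≤ S ≤ δ` give
`‖S x‖ ≤ δ‖x‖`, so `a(u,u) ≤ δ^(2m) a(v,v)`, and Bernoulli's inequality gives
`δ^(2m) (1 + 2m(1-δ)) ≤ 1`.
-/

open RealInnerProductSpace

section Operators

variable {E : Type*} [NormedAddCommGroup E] [InnerProductSpace ℝ E]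

/-- The identity `δ²⟪Tx,x⟫ - δ‖Tx‖² = ⟪T y, y⟫ + ⟪(δ - T) z, z⟫` with `y = δx - Tx`, `z = Tx`
shows `δ‖Tx‖² ≤ δ²⟪Tx,x⟫`. -/
lemma norm_apply_le_of_inner_apply_self_le {T : E →ₗ[ℝ] E} (hT : T.IsSymmetric)
    (hpos : ∀ x, 0 ≤ ⟪T x, x⟫) {δ : ℝ} (hδ : 0 < δ) (hle : ∀ x, ⟪T x, x⟫ ≤ δ * ⟪x, x⟫)
    (x : E) : ‖T x‖ ≤ δ * ‖x‖ := by
  have hsq : δ * ⟪T x, T x⟫ ≤ δ ^ 2 * ⟪T x, x⟫ := by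
    have h₁ := hpos (δ • x - T x)
    have h₂ := hle (T x)
    simp only [map_sub, map_smul, inner_sub_left, inner_sub_right, real_inner_smul_left,
      real_inner_smul_right, hT (T x) x] at h₁
    nlinarith [real_inner_comm x (T x)]
  have hnorm : δ * ‖T x‖ ^ 2 ≤ δ * (δ * ‖x‖) ^ 2 := by
    have := hle x
    rw [← real_inner_self_eq_norm_sq, mul_pow, ← real_inner_self_eq_norm_sq]
    nlinarith
  exact (sq_le_sq₀ (norm_nonneg _) (by positivity)).1 (le_of_mul_le_mul_left hnorm hδ)

lemma norm_pow_apply_le {T : E →ₗ[ℝ] E} {δ : ℝ} (hδ : 0 ≤ δ) (hT : ∀ x, ‖T x‖ ≤ δ * ‖x‖)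
    (n : ℕ) (x : E) : ‖(T ^ n) x‖ ≤ δ ^ n * ‖x‖ := by
  induction n with
  | zero => simp
  | succ n ih =>
    calc ‖(T ^ (n + 1)) x‖ = ‖T ((T ^ n) x)‖ := by rw [pow_succ', Module.End.mul_apply]
      _ ≤ δ * (δ ^ n * ‖x‖) := (hT _).trans (mul_le_mul_of_nonneg_left ih hδ)
      _ = δ ^ (n + 1) * ‖x‖ := by ring

lemma inner_one_sub_one_sub_mul_apply_self_le {W : Submodule ℝ E} {P E' : E →ₗ[ℝ] E}
    (hPmem : ∀ v, P v ∈ W) (hPorth : ∀ v, ∀ w ∈ W, ⟪v - P v, w⟫ = 0)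
    (hE'mem : ∀ w ∈ W, E' w ∈ W) (hE'le : ∀ w ∈ W, ⟪E' w, w⟫ ≤ ⟪w, w⟫) (u : E) :
    ⟪(1 - (1 - E') * P) u, u⟫ ≤ ⟪u, u⟫ := by
  have hw : ⟪u - P u, P u⟫ = 0 := hPorth u _ (hPmem u)
  have hE'w : ⟪u - P u, E' (P u)⟫ = 0 := hPorth u _ (hE'mem _ (hPmem u))
  have hle := hE'le _ (hPmem u)
  simp only [LinearMap.sub_apply, Module.End.one_apply, Module.End.mul_apply, inner_sub_left]
    at hw hE'w ⊢
  linarith [real_inner_comm u (P u), real_inner_comm u (E' (P u)),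
    real_inner_comm (P u) (E' (P u))]

end Operators

lemma pow_mul_one_add_mul_one_sub_le_one {δ : ℝ} (hδ0 : 0 ≤ δ) (hδ1 : δ ≤ 1) (n : ℕ) :
    δ ^ n * (1 + n * (1 - δ)) ≤ 1 := by
  have hbern : 1 + n * (1 - δ) ≤ (2 - δ) ^ n := by
    have := one_add_mul_le_pow (a := 1 - δ) (by linarith) n
    rwa [show 1 + (1 - δ) = 2 - δ by ring] at this
  calc δ ^ n * (1 + n * (1 - δ)) ≤ δ ^ n * (2 - δ) ^ n :=
        mul_le_mul_of_nonneg_left hbern (pow_nonneg hδ0 n)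
    _ = (1 - (1 - δ) ^ 2) ^ n := by rw [← mul_pow]; ring
    _ ≤ 1 := pow_le_one₀ (by nlinarith) (by nlinarith)

theorem stmt_5_general {V : Type*} [NormedAddCommGroup V] [InnerProductSpace ℝ V]
    (W : Submodule ℝ V)
    (P : V →ₗ[ℝ] V)
    (hPmem : ∀ v : V, P v ∈ W)
    (hPorth : ∀ v : V, ∀ u ∈ W, ⟪v - P v, u⟫ = 0)
    (S : V →ₗ[ℝ] V)
    (hsym : ∀ v w : V, ⟪S v, w⟫ = ⟪v, S w⟫)
    (hpsd : ∀ v : V, 0 ≤ ⟪S v, v⟫)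
    (δ : ℝ) (hδ0 : 0 < δ) (hδ1 : δ < 1)
    (hS : ∀ v : V, ⟪S v, v⟫ ≤ δ * ⟪v, v⟫)
    (m : ℕ)
    (E' : V →ₗ[ℝ] V)
    (hE'mem : ∀ w ∈ W, E' w ∈ W)
    (γ' : ℝ)
    (hE'bnd : ∀ w ∈ W, ⟪E' w, w⟫ ≤ γ' * ⟪w, w⟫)
    (γ : ℝ) (hγ : γ = 1 / (1 + 2 * (m : ℝ) * (1 - δ)))
    (hγ'γ : γ' ≤ γ)
    (E : V →ₗ[ℝ] V)
    (hE : E = S ^ m * (1 - (1 - E') * P) * S ^ m)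
    (v : V) :
    ⟪E v, v⟫ ≤ γ * ⟪v, v⟫ := by
  have hden : 1 ≤ 1 + 2 * (m : ℝ) * (1 - δ) := by
    nlinarith [(Nat.cast_nonneg m : (0 : ℝ) ≤ m)]
  have hγ'1 : γ' ≤ 1 := hγ'γ.trans (hγ ▸ div_le_one_of_le₀ hden (by linarith))
  have hE'le (w) (hw : w ∈ W) : ⟪E' w, w⟫ ≤ ⟪w, w⟫ :=
    (hE'bnd w hw).trans (mul_le_of_le_one_left real_inner_self_nonneg hγ'1)
  have hδpow : δ ^ (2 * m) ≤ γ := by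
    rw [hγ, le_div_iff₀ (by linarith)]
    exact_mod_cast pow_mul_one_add_mul_one_sub_le_one hδ0.le hδ1.le (2 * m)
  have hSm := norm_pow_apply_le hδ0.le (norm_apply_le_of_inner_apply_self_le hsym hpsd hδ0 hS) m v
  set u := (S ^ m) v
  calc ⟪E v, v⟫ = ⟪(1 - (1 - E') * P) u, u⟫ := by
        rw [hE]; exact LinearMap.IsSymmetric.pow hsym m _ _
    _ ≤ ‖u‖ ^ 2 := by
        rw [← real_inner_self_eq_norm_sq]
        exact inner_one_sub_one_sub_mul_apply_self_le hPmem hPorth hE'mem hE'le u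
    _ ≤ (δ ^ m * ‖v‖) ^ 2 := pow_le_pow_left₀ (norm_nonneg _) hSm 2
    _ = δ ^ (2 * m) * ⟪v, v⟫ := by rw [real_inner_self_eq_norm_sq]; ring
    _ ≤ γ * ⟪v, v⟫ := mul_le_mul_of_nonneg_right hδpow real_inner_self_nonneg

theorem stmt_5 {V : Type*} [NormedAddCommGroup V] [InnerProductSpace ℝ V]
    [FiniteDimensional ℝ V] (W : Submodule ℝ V)
    (P : V →ₗ[ℝ] V)
    (hPmem : ∀ v : V, P v ∈ W)
    (hPorth : ∀ v : V, ∀ u ∈ W, ⟪v - P v, u⟫ = 0)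
    (S : V →ₗ[ℝ] V)
    (hsym : ∀ v w : V, ⟪S v, w⟫ = ⟪v, S w⟫)
    (hpsd : ∀ v : V, 0 ≤ ⟪S v, v⟫)
    (δ : ℝ) (hδ0 : 0 < δ) (hδ1 : δ < 1)
    (hS : ∀ v : V, ⟪S v, v⟫ ≤ δ * ⟪v, v⟫)
    (m : ℕ) (hm : 1 ≤ m)
    (E' : V →ₗ[ℝ] V)
    (hE'mem : ∀ w ∈ W, E' w ∈ W)
    (hE'sym : ∀ w ∈ W, ∀ w' ∈ W, ⟪E' w, w'⟫ = ⟪w, E' w'⟫)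
    (hE'psd : ∀ w ∈ W, 0 ≤ ⟪E' w, w⟫)
    (γ' : ℝ)
    (hE'bnd : ∀ w ∈ W, ⟪E' w, w⟫ ≤ γ' * ⟪w, w⟫)
    (γ : ℝ) (hγ : γ = 1 / (1 + 2 * (m : ℝ) * (1 - δ)))
    (hγ'γ : γ' ≤ γ)
    (E : V →ₗ[ℝ] V)
    (hE : E = S ^ m * (1 - (1 - E') * P) * S ^ m)
    (v : V) :
    ⟪E v, v⟫ ≤ γ * ⟪v, v⟫ :=
  stmt_5_general W P hPmem hPorth S hsym hpsd δ hδ0 hδ1 hS m E' hE'mem γ' hE'bnd γ hγ hγ'γ E hE v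
end

section
/- The multigrid error operators E_k defined by E_0 = 0 and E_k = S_k^{m_k}(I − (I − E_{k−1})P_{k−1})S_k^{m_k} are symmetric positive semidefinite with respect to a(·,·), provided each S_k is a-symmetric positive semidefinite and each P_{k−1} is the a-orthogonal projection onto V_{k−1}. -/
open RealInnerProductSpace

theorem stmt_7 {V : Type*} [NormedAddCommGroup V] [InnerProductSpace ℝ V]
    [FiniteDimensional ℝ V] (J : ℕ)
    (W : ℕ → Submodule ℝ V)
    (hW : ∀ k, W k ≤ W (k + 1))
    (S : ℕ → (V →ₗ[ℝ] V)) (m : ℕ → ℕ)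
    (hm : ∀ k, 1 ≤ k → k ≤ J → 1 ≤ m k)
    (hSmem : ∀ k, 1 ≤ k → k ≤ J → ∀ v ∈ W k, S k v ∈ W k)
    (hSsym : ∀ k, 1 ≤ k → k ≤ J → ∀ v ∈ W k, ∀ w ∈ W k, ⟪S k v, w⟫ = ⟪v, S k w⟫)
    (hSpsd : ∀ k, 1 ≤ k → k ≤ J → ∀ v ∈ W k, 0 ≤ ⟪S k v, v⟫)
    (P : ℕ → (V →ₗ[ℝ] V))
    (hPmem : ∀ k, k < J → ∀ v : V, P k v ∈ W k)
    (hPorth : ∀ k, k < J → ∀ v : V, ∀ u ∈ W k, ⟪v - P k v, u⟫ = 0)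
    (E : ℕ → (V →ₗ[ℝ] V))
    (hE0 : E 0 = 0)
    (hEk : ∀ k, k + 1 ≤ J →
      E (k + 1) = S (k + 1) ^ m (k + 1) * (1 - (1 - E k) * P k) * S (k + 1) ^ m (k + 1)) :
    ∀ k, k ≤ J →
      (∀ v ∈ W k, ∀ w ∈ W k, ⟪E k v, w⟫ = ⟪v, E k w⟫) ∧
      (∀ v ∈ W k, 0 ≤ ⟪E k v, v⟫) := by
  have key : ∀ k, k ≤ J →
      (∀ v ∈ W k, E k v ∈ W k) ∧
      (∀ v ∈ W k, ∀ w ∈ W k, ⟪E k v, w⟫ = ⟪v, E k w⟫) ∧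
      (∀ v ∈ W k, 0 ≤ ⟪E k v, v⟫) := by
    intro k
    induction k with
    | zero =>
      intro _
      refine ⟨?_, ?_, ?_⟩ <;> simp [hE0]
    | succ k ih =>
      intro hkJ
      have hk : k ≤ J := Nat.le_of_succ_le hkJ
      have hkJ' : k < J := hkJ
      obtain ⟨hmem, hsym, hpsd⟩ := ih hk
      have hWk : W k ≤ W (k + 1) := hW k
      have hS1 : (1 : ℕ) ≤ k + 1 := Nat.le_add_left 1 k
      -- powers of S (k+1)
      have hpowmem : ∀ n, ∀ v ∈ W (k + 1), (S (k + 1) ^ n) v ∈ W (k + 1) := by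
        intro n
        induction n with
        | zero => intro v hv; simpa using hv
        | succ n ihn =>
          intro v hv
          rw [pow_succ, Module.End.mul_apply]
          exact ihn _ (hSmem (k + 1) hS1 hkJ v hv)
      have hpowsym : ∀ n, ∀ v ∈ W (k + 1), ∀ w ∈ W (k + 1),
          ⟪(S (k + 1) ^ n) v, w⟫ = ⟪v, (S (k + 1) ^ n) w⟫ := by
        intro n
        induction n with
        | zero => intro v _ w _; simp
        | succ n ihn =>
          intro v hv w hw
          rw [pow_succ, Module.End.mul_apply,
            ihn _ (hSmem (k + 1) hS1 hkJ v hv) w hw,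
            hSsym (k + 1) hS1 hkJ v hv _ (hpowmem n w hw)]
          rw [show (S (k+1)) ((S (k+1) ^ n) w) = (S (k+1) ^ (n+1)) w by
            rw [pow_succ', Module.End.mul_apply], pow_succ, Module.End.mul_apply]
      -- explicit formula for E (k+1)
      have hEapp : ∀ v : V, E (k + 1) v =
          (S (k + 1) ^ m (k + 1))
            (((S (k + 1) ^ m (k + 1)) v - P k ((S (k + 1) ^ m (k + 1)) v))
              + E k (P k ((S (k + 1) ^ m (k + 1)) v))) := by
        intro v
        rw [hEk k hkJ]
        simp only [Module.End.mul_apply, LinearMap.sub_apply, Module.End.one_apply]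
        congr 1
        abel
      -- membership
      have hmem' : ∀ v ∈ W (k + 1), E (k + 1) v ∈ W (k + 1) := by
        intro v hv
        rw [hEapp]
        refine hpowmem _ _ (Submodule.add_mem _ (Submodule.sub_mem _ (hpowmem _ _ hv) ?_) ?_)
        · exact hWk (hPmem k hkJ' _)
        · exact hWk (hmem _ (hPmem k hkJ' _))
      -- key inner product decomposition
      have hdecomp : ∀ v ∈ W (k + 1), ∀ w ∈ W (k + 1),
          ⟪E (k + 1) v, w⟫ =
            ⟪(S (k + 1) ^ m (k + 1)) v - P k ((S (k + 1) ^ m (k + 1)) v),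
              (S (k + 1) ^ m (k + 1)) w - P k ((S (k + 1) ^ m (k + 1)) w)⟫
            + ⟪E k (P k ((S (k + 1) ^ m (k + 1)) v)),
                P k ((S (k + 1) ^ m (k + 1)) w)⟫ := by
        intro v hv w hw
        set x := (S (k + 1) ^ m (k + 1)) v with hx
        set y := (S (k + 1) ^ m (k + 1)) w with hy
        have hxm : x ∈ W (k + 1) := hpowmem _ _ hv
        have hym : y ∈ W (k + 1) := hpowmem _ _ hw
        have hPx : P k x ∈ W k := hPmem k hkJ' x
        have hPy : P k y ∈ W k := hPmem k hkJ' y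
        have hEPx : E k (P k x) ∈ W k := hmem _ hPx
        have hzmem : (x - P k x) + E k (P k x) ∈ W (k + 1) :=
          Submodule.add_mem _ (Submodule.sub_mem _ hxm (hWk hPx)) (hWk hEPx)
        rw [hEapp, hpowsym _ _ hzmem w hw, ← hy]
        rw [inner_add_left]
        congr 1
        · -- ⟪x - P k x, y⟫ = ⟪x - P k x, y - P k y⟫
          rw [inner_sub_right]
          have : ⟪x - P k x, P k y⟫ = 0 := hPorth k hkJ' x _ hPy
          rw [this, sub_zero]
        · -- ⟪E k (P k x), y⟫ = ⟪E k (P k x), P k y⟫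
          have h0 : ⟪y - P k y, E k (P k x)⟫ = 0 := hPorth k hkJ' y _ hEPx
          have : ⟪E k (P k x), y - P k y⟫ = 0 := by
            rw [real_inner_comm]; exact h0
          rw [inner_sub_right] at this
          linarith
      refine ⟨hmem', ?_, ?_⟩
      · intro v hv w hw
        rw [hdecomp v hv w hw]
        have h2 := hdecomp w hw v hv
        rw [show (⟪v, E (k+1) w⟫:ℝ) = ⟪E (k+1) w, v⟫ from real_inner_comm _ _, h2]
        rw [real_inner_comm ((S (k + 1) ^ m (k + 1)) w - P k ((S (k + 1) ^ m (k + 1)) w))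
          ((S (k + 1) ^ m (k + 1)) v - P k ((S (k + 1) ^ m (k + 1)) v))]
        congr 1
        rw [hsym _ (hPmem k hkJ' _) _ (hPmem k hkJ' _), real_inner_comm]
      · intro v hv
        rw [hdecomp v hv v hv]
        have h1 : (0:ℝ) ≤ ⟪(S (k + 1) ^ m (k + 1)) v - P k ((S (k + 1) ^ m (k + 1)) v),
            (S (k + 1) ^ m (k + 1)) v - P k ((S (k + 1) ^ m (k + 1)) v)⟫ :=
          real_inner_self_nonneg
        have h2 : (0:ℝ) ≤ ⟪E k (P k ((S (k + 1) ^ m (k + 1)) v)),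
            P k ((S (k + 1) ^ m (k + 1)) v)⟫ := hpsd _ (hPmem k hkJ' _)
        linarith
  intro k hk
  obtain ⟨_, h1, h2⟩ := key k hk
  exact ⟨h1, h2⟩
end

section
/- Strengthened Cauchy–Schwarz with overlap count: let T^1,…,T^p be a-symmetric positive semidefinite operators on V such that a(T^i u, T^j v) = 0 whenever G_{ij} = 0, where G is a symmetric 0-1 matrix with row sums at most g_0. Then for any subset S ⊆ {1,…,p}×{1,…,p} and any u_1,…,u_p, v_1,…,v_p ∈ V with each T^i idempotent in the sense a(T^i w, T^i w) = a(T^i w, w), one has Σ_{(i,j)∈S} |a(T^i u_i, T^j v_j)| ≤ g_0 · (Σ_i a(T^i u_i, u_i))^{1/2} · (Σ_j a(T^j v_j, v_j))^{1/2}. -/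
open RealInnerProductSpace

theorem stmt_14 {V : Type*} [NormedAddCommGroup V] [InnerProductSpace ℝ V]
    [FiniteDimensional ℝ V] (p : ℕ)
    (T : Fin p → (V →ₗ[ℝ] V))
    (hsym : ∀ i, ∀ u v : V, ⟪T i u, v⟫ = ⟪u, T i v⟫)
    (hpsd : ∀ i, ∀ u : V, 0 ≤ ⟪T i u, u⟫)
    (hproj : ∀ i, ∀ w : V, ⟪T i w, T i w⟫ = ⟪T i w, w⟫)
    (G : Fin p → Fin p → ℝ)
    (hG01 : ∀ i j, G i j = 0 ∨ G i j = 1)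
    (hGsym : ∀ i j, G i j = G j i)
    (hGdiag : ∀ i, G i i = 1)
    (hGorth : ∀ i j, G i j = 0 → ∀ u v : V, ⟪T i u, T j v⟫ = 0)
    (g₀ : ℝ) (hg₀ : ∀ i, ∑ j, G i j ≤ g₀) :
    ∀ (s : Finset (Fin p × Fin p)) (u v : Fin p → V),
      ∑ ij ∈ s, |⟪T ij.1 (u ij.1), T ij.2 (v ij.2)⟫| ≤
        g₀ * Real.sqrt (∑ i, ⟪T i (u i), u i⟫) *
          Real.sqrt (∑ j, ⟪T j (v j), v j⟫) := by
  intro s u v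
  rcases Nat.eq_zero_or_pos p with hp | hp
  · subst hp
    have hs : s = ∅ := Finset.eq_empty_of_forall_notMem (fun x _ => (Fin.elim0 x.1))
    simp [hs]
  -- g₀ ≥ 0 (indeed ≥ 1)
  have hGnn : ∀ i j, 0 ≤ G i j := fun i j => by
    rcases hG01 i j with h | h <;> simp [h]
  have hg₀nn : 0 ≤ g₀ := by
    obtain ⟨i⟩ := Fin.pos_iff_nonempty.mp hp
    exact le_trans (Finset.sum_nonneg fun j _ => hGnn i j) (hg₀ i)
  set a : Fin p → ℝ := fun i => ‖T i (u i)‖ with ha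
  set b : Fin p → ℝ := fun j => ‖T j (v j)‖ with hb
  have hinner_u : ∀ i, ⟪T i (u i), u i⟫ = a i ^ 2 := fun i => by
    rw [← hproj i (u i), real_inner_self_eq_norm_sq]
  have hinner_v : ∀ j, ⟪T j (v j), v j⟫ = b j ^ 2 := fun j => by
    rw [← hproj j (v j), real_inner_self_eq_norm_sq]
  -- step 1: termwise bound
  have key : ∀ ij : Fin p × Fin p,
      |⟪T ij.1 (u ij.1), T ij.2 (v ij.2)⟫| ≤ G ij.1 ij.2 * (a ij.1 * b ij.2) := by
    rintro ⟨i, j⟩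
    rcases hG01 i j with h | h
    · simp [hGorth i j h, h]
    · simpa [h] using abs_real_inner_le_norm (T i (u i)) (T j (v j))
  have step1 : ∑ ij ∈ s, |⟪T ij.1 (u ij.1), T ij.2 (v ij.2)⟫| ≤
      ∑ ij : Fin p × Fin p, G ij.1 ij.2 * (a ij.1 * b ij.2) := by
    calc ∑ ij ∈ s, |⟪T ij.1 (u ij.1), T ij.2 (v ij.2)⟫|
        ≤ ∑ ij ∈ s, G ij.1 ij.2 * (a ij.1 * b ij.2) :=
          Finset.sum_le_sum fun ij _ => key ij
      _ ≤ ∑ ij : Fin p × Fin p, G ij.1 ij.2 * (a ij.1 * b ij.2) :=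
          Finset.sum_le_sum_of_subset_of_nonneg (Finset.subset_univ s)
            (fun ij _ _ => mul_nonneg (hGnn _ _)
              (mul_nonneg (norm_nonneg _) (norm_nonneg _)))
  -- step 2: Cauchy–Schwarz over pairs
  have step2 : ∑ ij : Fin p × Fin p, G ij.1 ij.2 * (a ij.1 * b ij.2) ≤
      Real.sqrt (∑ ij : Fin p × Fin p, G ij.1 ij.2 * a ij.1 ^ 2) *
        Real.sqrt (∑ ij : Fin p × Fin p, G ij.1 ij.2 * b ij.2 ^ 2) := by
    have := Real.sum_mul_le_sqrt_mul_sqrt (Finset.univ : Finset (Fin p × Fin p))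
      (fun ij => Real.sqrt (G ij.1 ij.2) * a ij.1)
      (fun ij => Real.sqrt (G ij.1 ij.2) * b ij.2)
    calc ∑ ij : Fin p × Fin p, G ij.1 ij.2 * (a ij.1 * b ij.2)
        = ∑ ij : Fin p × Fin p,
            (Real.sqrt (G ij.1 ij.2) * a ij.1) * (Real.sqrt (G ij.1 ij.2) * b ij.2) := by
          refine Finset.sum_congr rfl fun ij _ => ?_
          rw [show (Real.sqrt (G ij.1 ij.2) * a ij.1) * (Real.sqrt (G ij.1 ij.2) * b ij.2)
            = (Real.sqrt (G ij.1 ij.2) * Real.sqrt (G ij.1 ij.2)) * (a ij.1 * b ij.2) by ring,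
            Real.mul_self_sqrt (hGnn _ _)]
      _ ≤ _ := by
          refine this.trans_eq ?_
          congr 1 <;> congr 1 <;> refine Finset.sum_congr rfl fun ij _ => ?_ <;>
            rw [mul_pow, Real.sq_sqrt (hGnn _ _)]
  -- step 3: bound the two sums
  have hA : ∑ ij : Fin p × Fin p, G ij.1 ij.2 * a ij.1 ^ 2 ≤ g₀ * ∑ i, a i ^ 2 := by
    rw [← Finset.univ_product_univ, Finset.sum_product, Finset.mul_sum]
    refine Finset.sum_le_sum fun i _ => ?_
    show _ ≤ g₀ * _; simp only
    rw [← Finset.sum_mul]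
    exact mul_le_mul_of_nonneg_right (hg₀ i) (sq_nonneg _)
  have hB : ∑ ij : Fin p × Fin p, G ij.1 ij.2 * b ij.2 ^ 2 ≤ g₀ * ∑ j, b j ^ 2 := by
    rw [← Finset.univ_product_univ, Finset.sum_product_right, Finset.mul_sum]
    refine Finset.sum_le_sum fun j _ => ?_
    show _ ≤ g₀ * _; simp only
    have : ∑ i, G i j * b j ^ 2 = (∑ i, G j i) * b j ^ 2 := by
      rw [Finset.sum_mul]; exact Finset.sum_congr rfl fun i _ => by rw [hGsym]
    rw [this]
    exact mul_le_mul_of_nonneg_right (hg₀ j) (sq_nonneg _)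
  have hAnn : 0 ≤ ∑ ij : Fin p × Fin p, G ij.1 ij.2 * a ij.1 ^ 2 :=
    Finset.sum_nonneg fun ij _ => mul_nonneg (hGnn _ _) (sq_nonneg _)
  have hBnn : 0 ≤ ∑ ij : Fin p × Fin p, G ij.1 ij.2 * b ij.2 ^ 2 :=
    Finset.sum_nonneg fun ij _ => mul_nonneg (hGnn _ _) (sq_nonneg _)
  have step3 : Real.sqrt (∑ ij : Fin p × Fin p, G ij.1 ij.2 * a ij.1 ^ 2) *
        Real.sqrt (∑ ij : Fin p × Fin p, G ij.1 ij.2 * b ij.2 ^ 2) ≤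
      (Real.sqrt g₀ * Real.sqrt (∑ i, a i ^ 2)) *
        (Real.sqrt g₀ * Real.sqrt (∑ j, b j ^ 2)) := by
    gcongr
    · rw [← Real.sqrt_mul hg₀nn]; exact Real.sqrt_le_sqrt hA
    · rw [← Real.sqrt_mul hg₀nn]; exact Real.sqrt_le_sqrt hB
  have hrw : (Real.sqrt g₀ * Real.sqrt (∑ i, a i ^ 2)) *
        (Real.sqrt g₀ * Real.sqrt (∑ j, b j ^ 2)) =
      g₀ * Real.sqrt (∑ i, ⟪T i (u i), u i⟫) * Real.sqrt (∑ j, ⟪T j (v j), v j⟫) := by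
    simp_rw [hinner_u, hinner_v]
    rw [show (Real.sqrt g₀ * Real.sqrt (∑ i, a i ^ 2)) *
        (Real.sqrt g₀ * Real.sqrt (∑ j, b j ^ 2)) =
      (Real.sqrt g₀ * Real.sqrt g₀) * Real.sqrt (∑ i, a i ^ 2) *
        Real.sqrt (∑ j, b j ^ 2) by ring, Real.mul_self_sqrt hg₀nn]
  linarith [step1, step2, step3, hrw]
end

section
/- If each operator T^i (i = 1,…,p) on (V, a) is a-symmetric positive semidefinite and satisfies a(T^i u, T^i u) ≤ (1/p)·a(T^i u, u) for all u, then for any subset S ⊆ {1,…,p}×{1,…,p} and any u_i, v_j ∈ V, Σ_{(i,j)∈S} |a(T^i u_i, T^j v_j)| ≤ (Σ_{i=1}^p a(T^i u_i, u_i))^{1/2} · (Σ_{j=1}^p a(T^j v_j, v_j))^{1/2}, i.e., the strengthened Cauchy–Schwarz constant equals 1. -/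
open RealInnerProductSpace

lemma aux_sum_norm_le {p : ℕ} (hp : 0 < p) (x : Fin p → ℝ) (A : Fin p → ℝ)
    (hx : ∀ i, 0 ≤ x i) (hA : ∀ i, 0 ≤ A i)
    (h : ∀ i, (x i) ^ 2 ≤ (1 / (p : ℝ)) * A i) :
    ∑ i, x i ≤ Real.sqrt (∑ i, A i) := by
  have hp' : (0 : ℝ) < p := by exact_mod_cast hp
  have h1 : (∑ i, x i) ^ 2 ≤ ∑ i, A i := by
    calc (∑ i, x i) ^ 2 ≤ (Finset.univ.card : ℝ) * ∑ i, (x i) ^ 2 :=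
          sq_sum_le_card_mul_sum_sq
    _ ≤ (p : ℝ) * ∑ i, (1 / (p : ℝ)) * A i := by
        rw [Finset.card_univ, Fintype.card_fin]
        exact mul_le_mul_of_nonneg_left (Finset.sum_le_sum fun i _ => h i) hp'.le
    _ = ∑ i, A i := by
        rw [Finset.mul_sum]
        congr 1; ext i; field_simp
  have h2 : 0 ≤ ∑ i, x i := Finset.sum_nonneg fun i _ => hx i
  nlinarith [Real.sq_sqrt (Finset.sum_nonneg fun i (_ : i ∈ Finset.univ) => hA i),
    Real.sqrt_nonneg (∑ i, A i)]

theorem stmt_15 {V : Type*} [NormedAddCommGroup V] [InnerProductSpace ℝ V]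
    [FiniteDimensional ℝ V] (p : ℕ) (hp : 0 < p)
    (T : Fin p → (V →ₗ[ℝ] V))
    (hsym : ∀ i, ∀ u v : V, ⟪T i u, v⟫ = ⟪u, T i v⟫)
    (hpsd : ∀ i, ∀ u : V, 0 ≤ ⟪T i u, u⟫)
    (hdamp : ∀ i, ∀ u : V, ⟪T i u, T i u⟫ ≤ (1 / (p : ℝ)) * ⟪T i u, u⟫) :
    ∀ (s : Finset (Fin p × Fin p)) (u v : Fin p → V),
      ∑ ij ∈ s, |⟪T ij.1 (u ij.1), T ij.2 (v ij.2)⟫| ≤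
        Real.sqrt (∑ i, ⟪T i (u i), u i⟫) *
          Real.sqrt (∑ j, ⟪T j (v j), v j⟫) := by
  intro s u v
  have key : ∀ (w : Fin p → V), ∑ i, ‖T i (w i)‖ ≤ Real.sqrt (∑ i, ⟪T i (w i), w i⟫) := by
    intro w
    apply aux_sum_norm_le hp _ _ (fun i => norm_nonneg _) (fun i => hpsd i (w i))
    intro i
    have := hdamp i (w i)
    rwa [real_inner_self_eq_norm_sq] at this
  calc ∑ ij ∈ s, |⟪T ij.1 (u ij.1), T ij.2 (v ij.2)⟫|
      ≤ ∑ ij ∈ s, ‖T ij.1 (u ij.1)‖ * ‖T ij.2 (v ij.2)‖ :=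
        Finset.sum_le_sum fun ij _ => abs_real_inner_le_norm _ _
    _ ≤ ∑ ij : Fin p × Fin p, ‖T ij.1 (u ij.1)‖ * ‖T ij.2 (v ij.2)‖ :=
        Finset.sum_le_sum_of_subset_of_nonneg (Finset.subset_univ s)
          (fun ij _ _ => mul_nonneg (norm_nonneg _) (norm_nonneg _))
    _ = (∑ i, ‖T i (u i)‖) * (∑ j, ‖T j (v j)‖) := by
        rw [Finset.sum_mul_sum, ← Finset.sum_product']
        rfl
    _ ≤ Real.sqrt (∑ i, ⟪T i (u i), u i⟫) * Real.sqrt (∑ j, ⟪T j (v j), v j⟫) :=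
        mul_le_mul (key u) (key v) (Finset.sum_nonneg fun j _ => norm_nonneg _)
          (Real.sqrt_nonneg _)
end
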